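/- Let D > 0, c ∈ ℝ, r₁, r₂ > 0, ĥ₁, ĥ₂, ĝ₂ > 0, n > 0 and L₀ > 0. Suppose U₁, U₂ : [0, L₀] → ℝ are twice continuously differentiable, with Uᵢ(0) = Uᵢ(L₀) = 0, Uᵢ(ξ) > 0 for ξ ∈ (0, L₀), D U₁''(ξ) + c U₁'(ξ) + U₁(ξ)(r₁ − (ĥ₁ U₁(ξ))ⁿ) = 0 and D U₂''(ξ) + c U₂'(ξ) + U₂(ξ)(r₂ − (ĥ₂ U₂(ξ))ⁿ) = 0 for all ξ ∈ (0, L₀). If r₂ ≤ r₁ and (r₂/r₁)^{1/n} ĥ₁ ≤ ĝ₂, then ĝ₂ U₁(ξ) ≥ ĥ₂ U₂(ξ) for all ξ ∈ [0, L₀]. -/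

import Mathlib

/-!
Put `u = ĝ₂ U₁` and `v = ĥ₂ U₂`. If `v > u` somewhere, there is an interval `(a, b)` on which
`v > u`, with `u = v` at `a` and `b`. At an interior maximum of `U₁` the equation forces
`(ĥ₁ U₁)ⁿ ≤ r₁`, hence `(ĥ₁ U₁)ⁿ ≤ r₁` everywhere, and together with `r₂ ≤ r₁` and
`(r₂/r₁)^{1/n} ĥ₁ ≤ ĝ₂` this makes the growth rate `r₂ - (ĥ₂ U₂)ⁿ` of `v` smaller than the growth
rate `r₁ - (ĥ₁ U₁)ⁿ` of `u` on `(a, b)`. The weighted Wronskian `e^{cξ/D} (u v' - u' v)` is then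
strictly increasing on `[a, b]`, whereas `v - u`, vanishing at `a` and `b` and positive between,
makes it `≥ 0` at `a` and `≤ 0` at `b`.
-/

open Set Real Filter Topology

theorem IsLocalMax.deriv_deriv_nonpos {f : ℝ → ℝ} {a : ℝ} (h : IsLocalMax f a)
    (hc : ContinuousAt f a) : deriv (deriv f) a ≤ 0 := by
  by_contra! hpos
  have hconst : ∀ᶠ x in 𝓝 a, f x = f a :=
    (h.and (isLocalMin_of_deriv_deriv_pos hpos h.deriv_eq_zero hc)).mono
      fun x hx ↦ le_antisymm hx.1 hx.2
  have hderiv : deriv f =ᶠ[𝓝 a] fun _ ↦ 0 :=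
    hconst.eventually_nhds.mono fun x hx ↦ by
      rw [EventuallyEq.deriv_eq (f := fun _ ↦ f a) hx, deriv_const]
  rw [hderiv.deriv_eq, deriv_const] at hpos
  exact lt_irrefl 0 hpos

theorem IsLocalMinOn.mul_hasDerivWithinAt_nonneg {f : ℝ → ℝ} {f' x y : ℝ} {s : Set ℝ}
    (h : IsLocalMinOn f s x) (hf : HasDerivWithinAt f f' s x) (hs : segment ℝ x y ⊆ s) :
    0 ≤ (y - x) * f' := by
  simpa [mul_comm] using h.hasFDerivWithinAt_nonneg hf.hasFDerivWithinAt
    (sub_mem_posTangentConeAt_of_segment_subset hs)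

theorem ContDiffOn.hasDerivAt_derivWithin_Icc {u : ℝ → ℝ} {a b x : ℝ}
    (hu : ContDiffOn ℝ 2 u (Icc a b)) (hx : x ∈ Ioo a b) :
    HasDerivAt (derivWithin u (Icc a b)) (deriv (deriv u) x) x := by
  have hC1 : ContDiffOn ℝ 1 (deriv u) (Ioo a b) :=
    (hu.mono Ioo_subset_Icc_self).deriv_of_isOpen isOpen_Ioo (by norm_num)
  refine ((hC1.differentiableOn one_ne_zero x hx).differentiableAt
    (isOpen_Ioo.mem_nhds hx)).hasDerivAt.congr_of_eventuallyEq ?_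
  filter_upwards [isOpen_Ioo.mem_nhds hx] with y hy
  exact derivWithin_of_mem_nhds (Icc_mem_nhds hy.1 hy.2)

theorem nonneg_of_pos_on_Ioo {f : ℝ → ℝ} {a b : ℝ} (hab : a < b) (hf : ContinuousOn f (Icc a b))
    (hpos : ∀ x ∈ Ioo a b, 0 < f x) : ∀ x ∈ Icc a b, 0 ≤ f x := by
  have hmaps := MapsTo.closure_of_continuousOn (t := Ioi 0) (f := f) (fun x hx ↦ hpos x hx)
    (by rwa [closure_Ioo hab.ne])
  rwa [closure_Ioo hab.ne, closure_Ioi] at hmaps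

theorem exists_zero_of_pos_on_Ioc {f : ℝ → ℝ} {p x : ℝ} (hpx : p ≤ x)
    (hf : ContinuousOn f (Icc p x)) (hp : f p ≤ 0) (hx : 0 < f x) :
    ∃ a ∈ Ico p x, f a = 0 ∧ ∀ y ∈ Ioc a x, 0 < f y := by
  set S := Icc p x ∩ f ⁻¹' Iic 0
  have hS : IsCompact S :=
    isCompact_Icc.of_isClosed_subset (hf.preimage_isClosed_of_isClosed isClosed_Icc isClosed_Iic)
      inter_subset_left
  have haS : sSup S ∈ S := hS.sSup_mem ⟨p, ⟨le_rfl, hpx⟩, hp⟩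
  have hpos : ∀ y ∈ Ioc (sSup S) x, 0 < f y := fun y hy ↦ by
    by_contra! hle
    exact hy.1.not_ge (le_csSup hS.bddAbove ⟨⟨haS.1.1.trans hy.1.le, hy.2⟩, hle⟩)
  have hax : sSup S < x := haS.1.2.lt_of_ne fun h ↦ by
    have hfa : f (sSup S) ≤ 0 := haS.2
    rw [h] at hfa; linarith
  obtain ⟨c, hc, hfc⟩ := intermediate_value_Icc hax.le (hf.mono (Icc_subset_Icc haS.1.1 le_rfl))
    ⟨haS.2, hx.le⟩
  have hca : c = sSup S := by
    by_contra hne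
    exact (hpos c ⟨hc.1.lt_of_ne (Ne.symm hne), hc.2⟩).ne' hfc
  exact ⟨sSup S, ⟨haS.1.1, hax⟩, hca ▸ hfc, hpos⟩

theorem exists_zero_of_pos_on_Ico {f : ℝ → ℝ} {x q : ℝ} (hxq : x ≤ q)
    (hf : ContinuousOn f (Icc x q)) (hq : f q ≤ 0) (hx : 0 < f x) :
    ∃ b ∈ Ioc x q, f b = 0 ∧ ∀ y ∈ Ico x b, 0 < f y := by
  have hf' : ContinuousOn (fun y ↦ f (-y)) (Icc (-q) (-x)) :=
    hf.comp continuousOn_neg fun y hy ↦ ⟨le_neg.2 hy.2, neg_le.2 hy.1⟩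
  obtain ⟨a, ha, hfa, hpos⟩ :=
    exists_zero_of_pos_on_Ioc (neg_le_neg hxq) hf' (by simpa) (by simpa)
  refine ⟨-a, ⟨lt_neg.2 ha.2, neg_le.2 ha.1⟩, hfa, fun y hy ↦ ?_⟩
  simpa using hpos (-y) ⟨lt_neg.2 hy.2, neg_le_neg hy.1⟩

theorem exists_Ioo_pos_of_continuousOn {f : ℝ → ℝ} {p q x : ℝ} (hf : ContinuousOn f (Icc p q))
    (hp : f p ≤ 0) (hq : f q ≤ 0) (hx : x ∈ Icc p q) (hfx : 0 < f x) :
    ∃ a b, p ≤ a ∧ a < b ∧ b ≤ q ∧ f a = 0 ∧ f b = 0 ∧ ∀ y ∈ Ioo a b, 0 < f y := by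
  obtain ⟨a, ha, hfa, hleft⟩ :=
    exists_zero_of_pos_on_Ioc hx.1 (hf.mono (Icc_subset_Icc le_rfl hx.2)) hp hfx
  obtain ⟨b, hb, hfb, hright⟩ :=
    exists_zero_of_pos_on_Ico hx.2 (hf.mono (Icc_subset_Icc hx.1 le_rfl)) hq hfx
  refine ⟨a, b, ha.1, ha.2.trans hb.1, hb.2, hfa, hfb, fun y hy ↦ ?_⟩
  rcases le_or_gt y x with hyx | hxy
  · exact hleft y ⟨hy.1, hyx⟩
  · exact hright y ⟨hxy.le, hy.2⟩

theorem ode_const_mul {D c ρ k x : ℝ} {U : ℝ → ℝ}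
    (h : D * deriv (deriv U) x + c * deriv U x + U x * ρ = 0) :
    D * deriv (deriv fun y ↦ k * U y) x + c * deriv (fun y ↦ k * U y) x + k * U x * ρ = 0 := by
  simp only [deriv_const_mul_field']
  linear_combination k * h

/-- The factor `exp (k x)` with `k = c / D` absorbs the drift term of `D w'' + c w'`, so that
`D W' = exp (k x) u v (ρ - σ)` for solutions of `D w'' + c w' + w ρ = 0` and `… + w σ = 0`;
`derivWithin` keeps `W` continuous up to the endpoints of `s`. -/
noncomputable def weightedWronskian (k : ℝ) (s : Set ℝ) (u v : ℝ → ℝ) (x : ℝ) : ℝ :=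
  exp (k * x) * (u x * derivWithin v s x - derivWithin u s x * v x)

theorem weightedWronskian_of_eq {k x : ℝ} {s : Set ℝ} {u v : ℝ → ℝ} (h : u x = v x) :
    weightedWronskian k s u v x = exp (k * x) * u x * (derivWithin v s x - derivWithin u s x) := by
  unfold weightedWronskian
  rw [← h]
  ring

theorem hasDerivAt_exp_mul_wronskian {u v u' v' : ℝ → ℝ} {D c ρ σ u'' v'' x : ℝ} (hD : D ≠ 0)
    (hu : HasDerivAt u (u' x) x) (hv : HasDerivAt v (v' x) x)
    (hu' : HasDerivAt u' u'' x) (hv' : HasDerivAt v' v'' x)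
    (hode_u : D * u'' + c * u' x + u x * ρ = 0) (hode_v : D * v'' + c * v' x + v x * σ = 0) :
    HasDerivAt (fun y ↦ exp (c / D * y) * (u y * v' y - u' y * v y))
      (exp (c / D * x) * u x * v x * (ρ - σ) / D) x := by
  have hexp : HasDerivAt (fun y ↦ exp (c / D * y)) (exp (c / D * x) * (c / D)) x := by
    simpa using ((hasDerivAt_id x).const_mul (c / D)).exp
  refine (hexp.mul ((hu.mul hv').sub (hu'.mul hv))).congr_deriv ?_
  simp only [Pi.mul_apply, Pi.sub_apply]
  field_simp
  linear_combination u x * hode_v - v x * hode_u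

theorem strictMonoOn_weightedWronskian {u v ρ σ : ℝ → ℝ} {D c a b : ℝ} (hD : 0 < D) (hab : a < b)
    (hu : ContDiffOn ℝ 2 u (Icc a b)) (hv : ContDiffOn ℝ 2 v (Icc a b))
    (hode_u : ∀ x ∈ Ioo a b, D * deriv (deriv u) x + c * deriv u x + u x * ρ x = 0)
    (hode_v : ∀ x ∈ Ioo a b, D * deriv (deriv v) x + c * deriv v x + v x * σ x = 0)
    (hu_pos : ∀ x ∈ Ioo a b, 0 < u x) (hv_pos : ∀ x ∈ Ioo a b, 0 < v x)
    (hσρ : ∀ x ∈ Ioo a b, σ x < ρ x) :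
    StrictMonoOn (weightedWronskian (c / D) (Icc a b) u v) (Icc a b) := by
  have hu' := hu.continuousOn_derivWithin (uniqueDiffOn_Icc hab) one_le_two
  have hv' := hv.continuousOn_derivWithin (uniqueDiffOn_Icc hab) one_le_two
  refine strictMonoOn_of_deriv_pos (convex_Icc a b) ?_ fun x hx ↦ ?_
  · unfold weightedWronskian
    have := hu.continuousOn
    have := hv.continuousOn
    fun_prop
  rw [interior_Icc] at hx
  have hnhds : Icc a b ∈ 𝓝 x := Icc_mem_nhds hx.1 hx.2
  have hasDeriv {w : ℝ → ℝ} (hw : ContDiffOn ℝ 2 w (Icc a b)) :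
      HasDerivAt w (derivWithin w (Icc a b) x) x :=
    ((hw.differentiableOn two_ne_zero x (mem_of_mem_nhds hnhds)).hasDerivWithinAt).hasDerivAt
      hnhds
  have hode_u' := hode_u x hx
  have hode_v' := hode_v x hx
  rw [← derivWithin_of_mem_nhds (f := u) hnhds] at hode_u'
  rw [← derivWithin_of_mem_nhds (f := v) hnhds] at hode_v'
  unfold weightedWronskian
  rw [(hasDerivAt_exp_mul_wronskian hD.ne' (hasDeriv hu) (hasDeriv hv)
    (hu.hasDerivAt_derivWithin_Icc hx) (hv.hasDerivAt_derivWithin_Icc hx)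
    hode_u' hode_v').deriv]
  have huv := mul_pos (mul_pos (exp_pos (c / D * x)) (hu_pos x hx)) (hv_pos x hx)
  exact div_pos (mul_pos huv (sub_pos.2 (hσρ x hx))) hD

theorem false_of_lt_on_Ioo_of_growth_lt {u v ρ σ : ℝ → ℝ} {D c a b : ℝ} (hD : 0 < D)
    (hab : a < b) (hu : ContDiffOn ℝ 2 u (Icc a b)) (hv : ContDiffOn ℝ 2 v (Icc a b))
    (hode_u : ∀ x ∈ Ioo a b, D * deriv (deriv u) x + c * deriv u x + u x * ρ x = 0)
    (hode_v : ∀ x ∈ Ioo a b, D * deriv (deriv v) x + c * deriv v x + v x * σ x = 0)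
    (hua : u a = v a) (hub : u b = v b) (hu_pos : ∀ x ∈ Ioo a b, 0 < u x)
    (huv : ∀ x ∈ Ioo a b, u x < v x) (hσρ : ∀ x ∈ Ioo a b, σ x < ρ x) : False := by
  set s := Icc a b
  have hW := strictMonoOn_weightedWronskian hD hab hu hv hode_u hode_v hu_pos
    (fun x hx ↦ (hu_pos x hx).trans (huv x hx)) hσρ
  have hu_nonneg := nonneg_of_pos_on_Ioo hab hu.continuousOn hu_pos
  have hgap_nonneg := nonneg_of_pos_on_Ioo hab (hv.continuousOn.sub hu.continuousOn)
    fun x hx ↦ sub_pos.2 (huv x hx)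
  have hgap_min {x : ℝ} (hx : x ∈ s) (hux : u x = v x) : IsLocalMinOn (fun y ↦ v y - u y) s x :=
    IsMinOn.localize fun y hy ↦ by simpa [hux] using hgap_nonneg y hy
  have hgap_deriv {x : ℝ} (hx : x ∈ s) : HasDerivWithinAt (fun y ↦ v y - u y)
      (derivWithin v s x - derivWithin u s x) s x :=
    ((hv.differentiableOn two_ne_zero x hx).hasDerivWithinAt).sub
      ((hu.differentiableOn two_ne_zero x hx).hasDerivWithinAt)
  have ha : a ∈ s := left_mem_Icc.2 hab.le
  have hb : b ∈ s := right_mem_Icc.2 hab.le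
  have hseg : segment ℝ a b ⊆ s := (segment_eq_Icc hab.le).subset
  have hda := (hgap_min ha hua).mul_hasDerivWithinAt_nonneg (hgap_deriv ha) hseg
  have hdb := (hgap_min hb hub).mul_hasDerivWithinAt_nonneg (hgap_deriv hb)
    (segment_symm ℝ b a ▸ hseg)
  have hWa : 0 ≤ weightedWronskian (c / D) s u v a := by
    rw [weightedWronskian_of_eq hua]
    exact mul_nonneg (mul_nonneg (exp_pos _).le (hu_nonneg a ha))
      (nonneg_of_mul_nonneg_right hda (sub_pos.2 hab))
  have hWb : weightedWronskian (c / D) s u v b ≤ 0 := by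
    rw [weightedWronskian_of_eq hub]
    exact mul_nonpos_of_nonneg_of_nonpos (mul_nonneg (exp_pos _).le (hu_nonneg b hb))
      (nonpos_of_mul_nonneg_right hdb (sub_neg.2 hab))
  exact (hW ha hb hab).not_ge (hWb.trans hWa)

theorem rpow_le_of_logistic {D c r h n a b : ℝ} {U : ℝ → ℝ} (hD : 0 < D) (hh : 0 ≤ h)
    (hn : 0 ≤ n) (hab : a < b) (hU : ContDiffOn ℝ 2 U (Icc a b)) (hUa : U a = 0) (hUb : U b = 0)
    (hpos : ∀ x ∈ Ioo a b, 0 < U x)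
    (hode : ∀ x ∈ Ioo a b,
      D * deriv (deriv U) x + c * deriv U x + U x * (r - (h * U x) ^ n) = 0) :
    ∀ x ∈ Icc a b, (h * U x) ^ n ≤ r := by
  obtain ⟨m, hm, hmax⟩ := isCompact_Icc.exists_isMaxOn (nonempty_Icc.2 hab.le) hU.continuousOn
  have hUm : 0 < U m := by
    have hmid : (a + b) / 2 ∈ Ioo a b := ⟨by linarith, by linarith⟩
    exact (hpos _ hmid).trans_le (hmax (Ioo_subset_Icc_self hmid))
  have hm' : m ∈ Ioo a b :=
    ⟨hm.1.lt_of_ne (by rintro rfl; simp [hUa] at hUm),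
      hm.2.lt_of_ne (by rintro rfl; simp [hUb] at hUm)⟩
  have hnhds : Icc a b ∈ 𝓝 m := Icc_mem_nhds hm'.1 hm'.2
  have hloc : IsLocalMax U m := hmax.isLocalMax hnhds
  have hU'' := hloc.deriv_deriv_nonpos (hU.continuousOn.continuousAt hnhds)
  have hrm : (h * U m) ^ n ≤ r := by
    have hode_m := hode m hm'
    rw [hloc.deriv_eq_zero] at hode_m
    by_contra! hlt
    nlinarith [mul_pos hUm (sub_pos.2 hlt)]
  intro x hx
  have hUx : 0 ≤ U x := nonneg_of_pos_on_Ioo hab hU.continuousOn hpos x hx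
  exact (rpow_le_rpow (mul_nonneg hh hUx) (mul_le_mul_of_nonneg_left (hmax hx) hh) hn).trans hrm

theorem sub_rpow_lt_sub_rpow {r₁ r₂ n t s w : ℝ} (hr₁ : 0 < r₁) (hr₂ : 0 ≤ r₂) (hr : r₂ ≤ r₁)
    (hn : 0 < n) (ht : 0 ≤ t) (htr : t ^ n ≤ r₁) (hts : (r₂ / r₁) ^ (1 / n) * t ≤ s)
    (hsw : s < w) : r₂ - w ^ n < r₁ - t ^ n := by
  have hq : 0 ≤ (r₂ / r₁) ^ (1 / n) := by positivity
  have hst : r₂ / r₁ * t ^ n ≤ s ^ n := by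
    calc r₂ / r₁ * t ^ n = ((r₂ / r₁) ^ (1 / n) * t) ^ n := by
          rw [mul_rpow hq ht, ← rpow_mul (by positivity), one_div_mul_cancel hn.ne', rpow_one]
      _ ≤ s ^ n := rpow_le_rpow (by positivity) hts hn.le
  have hsw' : s ^ n < w ^ n := rpow_lt_rpow ((mul_nonneg hq ht).trans hts) hsw hn
  have key : r₂ - r₂ / r₁ * t ^ n ≤ r₁ - t ^ n := by
    have : r₂ - r₂ / r₁ * t ^ n = r₂ / r₁ * (r₁ - t ^ n) := by field_simp
    rw [this]
    nlinarith [div_le_one_of_le₀ hr hr₁.le, sub_nonneg.2 htr]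
  linarith

theorem stmt14_general (D c r₁ r₂ hhat₁ hhat₂ ghat₂ n L₀ : ℝ)
    (hD : 0 < D) (hr₁ : 0 < r₁) (hr₂ : 0 < r₂)
    (hh₁ : 0 < hhat₁) (hg₂ : 0 < ghat₂) (hn : 0 < n) (hL₀ : 0 < L₀)
    (U₁ U₂ : ℝ → ℝ)
    (hreg₁ : ContDiffOn ℝ 2 U₁ (Icc 0 L₀)) (hreg₂ : ContDiffOn ℝ 2 U₂ (Icc 0 L₀))
    (hbc₁ : U₁ 0 = 0 ∧ U₁ L₀ = 0) (hbc₂ : U₂ 0 = 0 ∧ U₂ L₀ = 0)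
    (hpos₁ : ∀ ξ ∈ Ioo 0 L₀, 0 < U₁ ξ)
    (hode₁ : ∀ ξ ∈ Ioo 0 L₀,
      D * deriv (deriv U₁) ξ + c * deriv U₁ ξ + U₁ ξ * (r₁ - (hhat₁ * U₁ ξ) ^ n) = 0)
    (hode₂ : ∀ ξ ∈ Ioo 0 L₀,
      D * deriv (deriv U₂) ξ + c * deriv U₂ ξ + U₂ ξ * (r₂ - (hhat₂ * U₂ ξ) ^ n) = 0)
    (hr : r₂ ≤ r₁)
    (hgh : (r₂ / r₁) ^ (1 / n) * hhat₁ ≤ ghat₂) :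
    ∀ ξ ∈ Icc 0 L₀, hhat₂ * U₂ ξ ≤ ghat₂ * U₁ ξ := by
  by_contra! ⟨ξ, hξ, hlt⟩
  have hu : ContDiffOn ℝ 2 (fun x ↦ ghat₂ * U₁ x) (Icc 0 L₀) := contDiffOn_const.mul hreg₁
  have hv : ContDiffOn ℝ 2 (fun x ↦ hhat₂ * U₂ x) (Icc 0 L₀) := contDiffOn_const.mul hreg₂
  obtain ⟨a, b, h0a, hab, hbL, hgap_a, hgap_b, hgap⟩ :=
    exists_Ioo_pos_of_continuousOn (f := fun x ↦ hhat₂ * U₂ x - ghat₂ * U₁ x)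
      (hv.continuousOn.sub hu.continuousOn)
      (by simp [hbc₁.1, hbc₂.1]) (by simp [hbc₁.2, hbc₂.2]) hξ (sub_pos.2 hlt)
  have hsub : Ioo a b ⊆ Ioo 0 L₀ := Ioo_subset_Ioo h0a hbL
  have hbound := rpow_le_of_logistic hD hh₁.le hn.le hL₀ hreg₁ hbc₁.1 hbc₁.2 hpos₁ hode₁
  refine false_of_lt_on_Ioo_of_growth_lt (ρ := fun x ↦ r₁ - (hhat₁ * U₁ x) ^ n)
    (σ := fun x ↦ r₂ - (hhat₂ * U₂ x) ^ n) hD hab (hu.mono (Icc_subset_Icc h0a hbL))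
    (hv.mono (Icc_subset_Icc h0a hbL)) (fun x hx ↦ ode_const_mul (hode₁ x (hsub hx)))
    (fun x hx ↦ ode_const_mul (hode₂ x (hsub hx)))
    (sub_eq_zero.1 hgap_a).symm (sub_eq_zero.1 hgap_b).symm
    (fun x hx ↦ mul_pos hg₂ (hpos₁ x (hsub hx))) (fun x hx ↦ sub_pos.1 (hgap x hx))
    fun x hx ↦ ?_
  have hU₁x := hpos₁ x (hsub hx)
  exact sub_rpow_lt_sub_rpow hr₁ hr₂.le hr hn (by positivity)
    (hbound x (Ioo_subset_Icc_self (hsub hx)))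
    (by simpa only [mul_assoc] using mul_le_mul_of_nonneg_right hgh hU₁x.le)
    (sub_pos.1 (hgap x hx))

/-- Corollary 1, case D₁ = D₂ = D, non-invasibility: `U₁`, `U₂` positive
Dirichlet stationary states of `D Uᵢ'' + c Uᵢ' + Uᵢ(rᵢ − (ĥᵢUᵢ)ⁿ) = 0` on `[0, L₀]`.
If `r₂ ≤ r₁` and `(r₂/r₁)^{1/n} ĥ₁ ≤ ĝ₂`, then `ĝ₂ U₁ ≥ ĥ₂ U₂` on `[0, L₀]`. -/
theorem stmt14 (D c r₁ r₂ hhat₁ hhat₂ ghat₂ n L₀ : ℝ)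
    (hD : 0 < D) (hr₁ : 0 < r₁) (hr₂ : 0 < r₂)
    (hh₁ : 0 < hhat₁) (hh₂ : 0 < hhat₂) (hg₂ : 0 < ghat₂) (hn : 0 < n) (hL₀ : 0 < L₀)
    (U₁ U₂ : ℝ → ℝ)
    (hreg₁ : ContDiffOn ℝ 2 U₁ (Icc 0 L₀)) (hreg₂ : ContDiffOn ℝ 2 U₂ (Icc 0 L₀))
    (hbc₁ : U₁ 0 = 0 ∧ U₁ L₀ = 0) (hbc₂ : U₂ 0 = 0 ∧ U₂ L₀ = 0)
    (hpos₁ : ∀ ξ ∈ Ioo 0 L₀, 0 < U₁ ξ) (hpos₂ : ∀ ξ ∈ Ioo 0 L₀, 0 < U₂ ξ)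
    (hode₁ : ∀ ξ ∈ Ioo 0 L₀,
      D * deriv (deriv U₁) ξ + c * deriv U₁ ξ + U₁ ξ * (r₁ - (hhat₁ * U₁ ξ) ^ n) = 0)
    (hode₂ : ∀ ξ ∈ Ioo 0 L₀,
      D * deriv (deriv U₂) ξ + c * deriv U₂ ξ + U₂ ξ * (r₂ - (hhat₂ * U₂ ξ) ^ n) = 0)
    (hr : r₂ ≤ r₁)
    (hgh : (r₂ / r₁) ^ (1 / n) * hhat₁ ≤ ghat₂) :
    ∀ ξ ∈ Icc 0 L₀, hhat₂ * U₂ ξ ≤ ghat₂ * U₁ ξ :=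
  stmt14_general D c r₁ r₂ hhat₁ hhat₂ ghat₂ n L₀ hD hr₁ hr₂ hh₁ hg₂ hn hL₀ U₁ U₂ hreg₁ hreg₂ hbc₁
    hbc₂ hpos₁ hode₁ hode₂ hr hgh
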